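/- arXiv:2310.01367 — 2 statements merged into one kernel-verified Lean document; each statement's English description precedes it below -/
import Mathlib

section
/- Suppose the stationary measure ℙ satisfies conditions ID (with sequence (k_n)), FE and SE (with constants γ_+ < 0 and γ_- < 0). Fix ε ∈ (0,1/2), 0 < α < γ_+/(8γ_-), y ∈ supp ℙ, and consider the block auxiliary parsing of y_1^N; suppose the s-th block of y_1^N is good. Then, with ℓ_+ := 2 ln N/(−γ_+) and d_+ := 2N^α/ℓ_-, for all N large enough, for any ℓ ∈ ℕ, K ∈ {1,…,ℓ} and m ∈ ℕ, ℙ{x : #{j : y^{(j,s,N)} = x_{K+rℓ}^{K+rℓ+ℓ−1} for some r ∈ {0,1,…,⌊(N−K+1)/ℓ⌋−1}} = m} ≤ binom(d_+, m) · e^{m k_{ℓ_+}} · N^{−mε}. -/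
open MeasureTheory Filter Asymptotics
open scoped ENNReal Classical

noncomputable section

namespace ZM

/-- The left shift on one-sided sequences. -/
def shift {A : Type*} (x : ℕ → A) : ℕ → A := fun k => x (k + 1)

/-- The cylinder set of all sequences starting with the word `a`. -/
def cyl {A : Type*} {n : ℕ} (a : Fin n → A) : Set (ℕ → A) := {x | ∀ i : Fin n, x i = a i}

/-- The word `x_{p+1}^{p+ℓ}` of `x` (0-based: the letters at positions `p, …, p+ℓ-1`). -/
def seg {A : Type*} (y : ℕ → A) (p ℓ : ℕ) : Fin ℓ → A := fun i => y (p + i)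

/-- `w` occurs in `x` at (0-based) offset `r`. -/
def matchAt {A : Type*} (x : ℕ → A) {ℓ : ℕ} (w : Fin ℓ → A) (r : ℕ) : Prop :=
  ∀ i : Fin ℓ, x (r + i) = w i

/-- `w` appears as a substring of `x_1^N`. -/
def appears {A : Type*} (N : ℕ) (x : ℕ → A) {ℓ : ℕ} (w : Fin ℓ → A) : Prop :=
  ∃ r, r + ℓ ≤ N ∧ matchAt x w r

/-- The waiting time `W_ℓ(w, x)`: the least (1-based) position at which `w` occurs in `x`,
`⊤` if `w` never occurs. -/
def W {A : Type*} {ℓ : ℕ} (w : Fin ℓ → A) (x : ℕ → A) : ℕ∞ :=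
  sInf {r : ℕ∞ | ∃ n : ℕ, r = (n : ℕ∞) ∧ 1 ≤ n ∧ matchAt x w (n - 1)}

section ZMparsing

variable {A : Type*}

/-- Length of the Ziv–Merhav word starting at (0-based) position `p` of `y_1^N`, with
database `x_1^N`: the longest prefix of the remaining portion of `y_1^N` appearing as a
substring of `x_1^N`, or a single letter if there is no such prefix. -/
def zmLen (N : ℕ) (x y : ℕ → A) (p : ℕ) : ℕ :=
  max 1 (sSup {ℓ | p + ℓ ≤ N ∧ appears N x (seg y p ℓ)})

/-- Starting position of the `j`-th (0-based) word of the Ziv–Merhav parsing. -/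
def zmPos (N : ℕ) (x y : ℕ → A) : ℕ → ℕ
  | 0 => 0
  | j + 1 => zmPos N x y j + zmLen N x y (zmPos N x y j)

/-- `c_N(y|x)`: the number of words in the Ziv–Merhav parsing of `y_1^N` w.r.t. `x_1^N`. -/
def cN (N : ℕ) (x y : ℕ → A) : ℕ := sInf {c | N ≤ zmPos N x y c}

/-- The Ziv–Merhav estimator `Q̂_N(y, x) = c_N(y|x) ln N / N`. -/
def ZMest (N : ℕ) (x y : ℕ → A) : ℝ := (cN N x y : ℝ) * Real.log N / N

end ZMparsing

section MeasureDefs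

variable {A : Type*} [MeasurableSpace A]

/-- The measure of the cylinder of a word, as a real number. -/
def wp (μ : Measure (ℕ → A)) {n : ℕ} (a : Fin n → A) : ℝ := (μ (cyl a)).toReal

/-- `supp ℙ`: the set of sequences all of whose prefixes have positive measure. -/
def suppSet (μ : Measure (ℕ → A)) : Set (ℕ → A) := {x | ∀ n, 0 < μ (cyl (seg x 0 n))}

/-- Condition (ID): immediate decoupling on the support, with sequence `k`. -/
def CondID (μ : Measure (ℕ → A)) (k : ℕ → ℝ) : Prop :=
  Monotone k ∧ (k =o[atTop] fun n => (n : ℝ)) ∧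
    ∀ (n m : ℕ) (a : Fin n → A) (b : Fin m → A), 0 < μ (cyl a) → 0 < μ (cyl b) →
      wp μ (Fin.append a b) ≤ Real.exp (k n) * (wp μ a * wp μ b) ∧
      (0 < μ (cyl (Fin.append a b)) →
        Real.exp (-k n) * (wp μ a * wp μ b) ≤ wp μ (Fin.append a b))

/-- Condition (FE): fast enough decay, with rate `γp < 0`. -/
def CondFE (μ : Measure (ℕ → A)) (γp : ℝ) : Prop :=
  γp < 0 ∧ ∀ᶠ n : ℕ in atTop, ∀ a : Fin n → A, 0 < μ (cyl a) → wp μ a ≤ Real.exp (γp * n)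

/-- Condition (SE): slow enough decay, with rate `γm < 0`. -/
def CondSE (μ : Measure (ℕ → A)) (γm : ℝ) : Prop :=
  γm < 0 ∧ ∀ᶠ n : ℕ in atTop, ∀ a : Fin n → A, 0 < μ (cyl a) → Real.exp (γm * n) ≤ wp μ a

/-- Condition (KB): Kontoyiannis' bound on waiting times, with sequences `k`, `τ`. -/
def CondKB (μ : Measure (ℕ → A)) (k τ : ℕ → ℝ) : Prop :=
  (k =o[atTop] fun n => (n : ℝ)) ∧ (τ =o[atTop] fun n => (n : ℝ)) ∧
    ∀ (ℓ : ℕ) (a : Fin ℓ → A) (r : ℕ),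
      (μ {x | (r : ℕ∞) ≤ W a x}).toReal ≤
        Real.exp (-(Real.exp (-k ℓ) * wp μ a * (⌊((r : ℝ) - 1) / ((ℓ : ℝ) + τ ℓ)⌋ : ℝ)))

/-- Length of the next word of the auxiliary parsing of `y_1^N` starting at position `p`:
the shortest prefix of the remaining portion of `y_1^N` with measure at most `θ`, or the
whole remaining portion if there is no such prefix. -/
def auxLen (μ : Measure (ℕ → A)) (θ : ℝ) (N : ℕ) (y : ℕ → A) (p : ℕ) : ℕ :=
  if ∃ ℓ, 1 ≤ ℓ ∧ p + ℓ ≤ N ∧ wp μ (seg y p ℓ) ≤ θ then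
    sInf {ℓ | 1 ≤ ℓ ∧ p + ℓ ≤ N ∧ wp μ (seg y p ℓ) ≤ θ}
  else N - p

/-- Starting position of the `j`-th (0-based) word of the auxiliary parsing. -/
def auxPos (μ : Measure (ℕ → A)) (θ : ℝ) (N : ℕ) (y : ℕ → A) : ℕ → ℕ
  | 0 => 0
  | j + 1 => auxPos μ θ N y j + max 1 (auxLen μ θ N y (auxPos μ θ N y j))

/-- Length of the `j`-th (0-based) word of the auxiliary parsing. -/
def auxWordLen (μ : Measure (ℕ → A)) (θ : ℝ) (N : ℕ) (y : ℕ → A) (j : ℕ) : ℕ :=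
  max 1 (auxLen μ θ N y (auxPos μ θ N y j))

/-- The number of words in the auxiliary parsing of `y_1^N`. -/
def auxCount (μ : Measure (ℕ → A)) (θ : ℝ) (N : ℕ) (y : ℕ → A) : ℕ :=
  sInf {c | N ≤ auxPos μ θ N y c}

/-- Length of the next word of the block parsing within a block ending at position `e`:
the shortest prefix of the remaining portion of the block with measure at most `θ`;
`0` encodes that no such prefix exists (the rest of the block is the buffer). -/
def blkLen (μ : Measure (ℕ → A)) (θ : ℝ) (e : ℕ) (y : ℕ → A) (p : ℕ) : ℕ :=
  sInf {ℓ | 1 ≤ ℓ ∧ p + ℓ ≤ e ∧ wp μ (seg y p ℓ) ≤ θ}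

/-- Starting position of the `i`-th (0-based) word of the block starting at `q`, ending at `e`. -/
def blkPos (μ : Measure (ℕ → A)) (θ : ℝ) (e : ℕ) (y : ℕ → A) (q : ℕ) : ℕ → ℕ
  | 0 => q
  | i + 1 => blkPos μ θ e y q i + blkLen μ θ e y (blkPos μ θ e y q i)

/-- Number `d_s` of words in the block starting at `q` and ending at `e`. -/
def dCount (μ : Measure (ℕ → A)) (θ : ℝ) (e : ℕ) (y : ℕ → A) (q : ℕ) : ℕ :=
  sInf {i | blkLen μ θ e y (blkPos μ θ e y q i) = 0}

/-- The block starting at `q` and ending at `e` is good: its parsed words are pairwise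
distinct. -/
def GoodBlock (μ : Measure (ℕ → A)) (θ : ℝ) (e : ℕ) (y : ℕ → A) (q : ℕ) : Prop :=
  ∀ i j : ℕ, i < dCount μ θ e y q → j < dCount μ θ e y q →
    blkLen μ θ e y (blkPos μ θ e y q i) = blkLen μ θ e y (blkPos μ θ e y q j) →
    (∀ t < blkLen μ θ e y (blkPos μ θ e y q i),
      y (blkPos μ θ e y q i + t) = y (blkPos μ θ e y q j + t)) →
    i = j

end MeasureDefs

/-- The block length `⌊N^α⌋`. -/
def blockB (N : ℕ) (α : ℝ) : ℕ := ⌊(N : ℝ) ^ α⌋₊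

/-- The number `M_N` of blocks. -/
def blockM (N : ℕ) (α : ℝ) : ℕ := (N + blockB N α - 1) / blockB N α

/-- The starting position of the `s`-th (0-based) block. -/
def blockStart (N : ℕ) (α : ℝ) (s : ℕ) : ℕ := s * blockB N α

/-- The end position of the `s`-th (0-based) block. -/
def blockEnd (N : ℕ) (α : ℝ) (s : ℕ) : ℕ := min ((s + 1) * blockB N α) N

/-- `S_b(y_1^N)`: the set of bad blocks of the block auxiliary parsing (with threshold
`N^{-1-ε}`, word probabilities computed with `μ`). -/
def badSet {A : Type*} [MeasurableSpace A] (μ : Measure (ℕ → A)) (N : ℕ) (α ε : ℝ)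
    (y : ℕ → A) : Set ℕ :=
  {s | s < blockM N α ∧
    ¬ GoodBlock μ ((N : ℝ) ^ (-1 - ε)) (blockEnd N α s) y (blockStart N α s)}

/-- `ℓ₋ = ln N / (-2 γ₋)`. -/
def ellMinus (N : ℕ) (γm : ℝ) : ℝ := Real.log N / (-2 * γm)

/-- `ℓ₊ = 2 ln N / (-γ₊)`. -/
def ellPlus (N : ℕ) (γp : ℝ) : ℝ := 2 * Real.log N / (-γp)

/-- `d₊ = 2 N^α / ℓ₋`. -/
def dPlus (N : ℕ) (α γm : ℝ) : ℝ := 2 * (N : ℝ) ^ α / ellMinus N γm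

section CrossEntropy

variable {A : Type*} [MeasurableSpace A] [Fintype A]

/-- The `n`-th cross-entropy average `-(1/n) ∑_{a ∈ 𝒜ⁿ} ℚ[a] ln ℙ[a]`, real-valued version. -/
def hcSeq (μP μQ : Measure (ℕ → A)) (n : ℕ) : ℝ :=
  -(1 / (n : ℝ)) * ∑ a : Fin n → A, wp μQ a * Real.log (wp μP a)

/-- `-ln p` as an element of `[0, ∞]`, for `p ∈ [0, 1]`; equals `⊤` when `p = 0`. -/
def negLog (p : ℝ≥0∞) : ℝ≥0∞ := if p = 0 then ⊤ else ENNReal.ofReal (-Real.log p.toReal)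

/-- The `n`-th cross-entropy average, `[0, ∞]`-valued version. -/
def hcSeqE (μP μQ : Measure (ℕ → A)) (n : ℕ) : ℝ≥0∞ :=
  (∑ a : Fin n → A, μQ (cyl a) * negLog (μP (cyl a))) / (n : ℝ≥0∞)

end CrossEntropy

end ZM

/-!
Within a good block the parsed words of length `ℓ` are pairwise distinct and each has
probability at most `N^{-1-ε}`. If `x` contains `m` of them at the positions `K - 1 + r ℓ`,
`r < R ≤ N`, then distinct words sit in distinct slots, and slots are `ℓ` apart, so stationarity
and the upper bound of (ID) bound each choice of words and slots by `(e^{k_ℓ} N^{-1-ε})^m`.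
A union bound gives `binom(#words, m) (N e^{k_ℓ} N^{-1-ε})^m`. Finally (SE) forces
`ℓ ≥ 2 ℓ₋`, so a block of length `N^α` holds at most `d₊` such words, and (FE) forces
`ℓ ≤ ℓ₊`, so `k_ℓ ≤ k_{ℓ₊}`.

Since `A` carries an arbitrary σ-algebra, cylinders are replaced by their hulls made of
measurable atoms, which have the same outer measure.
-/

namespace ZM

section Shift

variable {A : Type*}

theorem shift_iterate_apply (x : ℕ → A) (p i : ℕ) : shift^[p] x i = x (p + i) := by
  induction p generalizing x with
  | zero => simp
  | succ p ih =>
    rw [Function.iterate_succ_apply, ih, shift]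
    congr 1
    omega

theorem setOf_matchAt_eq_preimage {n : ℕ} (w : Fin n → A) (r : ℕ) :
    {x | matchAt x w r} = shift^[r] ⁻¹' cyl w := by
  ext x
  simp [matchAt, cyl, shift_iterate_apply]

theorem matchAt_seg_iff (x y : ℕ → A) (p ℓ c : ℕ) :
    matchAt x (seg y p ℓ) c ↔ ∀ i < ℓ, y (p + i) = x (c + i) := by
  simp [matchAt, seg, Fin.forall_iff, eq_comm]

end Shift

theorem measure_preimage_shift_iterate_le {A : Type*} [MeasurableSpace A]
    {μ : Measure (ℕ → A)} (hstat : MeasurePreserving shift μ μ) (p : ℕ) (S : Set (ℕ → A)) :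
    μ (shift^[p] ⁻¹' S) ≤ μ S := by
  have h := hstat.iterate p
  have := Measure.le_map_apply (μ := μ) h.measurable.aemeasurable S
  rwa [h.map_eq] at this

theorem mem_measurableAtom_of_forall {ι : Type*} {β : ι → Type*}
    [∀ i, MeasurableSpace (β i)] {x z : ∀ i, β i} (h : ∀ i, z i ∈ measurableAtom (x i)) :
    z ∈ measurableAtom x := by
  -- the sets that do not separate `x` from `z` form a σ-algebra containing the generators
  let m : MeasurableSpace (∀ i, β i) :=
    { MeasurableSet' := fun S => (x ∈ S ↔ z ∈ S)
      measurableSet_empty := by simp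
      measurableSet_compl := fun _ hS => not_congr hS
      measurableSet_iUnion := fun _ hf => by simp only [Set.mem_iUnion]; exact exists_congr hf }
  have hle : MeasurableSpace.pi ≤ m := iSup_le fun i => by
    rintro _ ⟨T, hT, rfl⟩
    have hx : x i ∈ measurableAtom (z i) :=
      measurableAtom_eq_of_mem (h i) ▸ mem_measurableAtom_self (x i)
    exact ⟨fun hxT => mem_of_mem_measurableAtom (h i) hT hxT,
      fun hzT => mem_of_mem_measurableAtom hx hT hzT⟩
  simp only [measurableAtom, Set.mem_iInter]
  exact fun S hxS hS => (hle S hS).1 hxS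

theorem iInter_preimage_iterate_subset {α ι : Type*} (T : α → α) (f : ι → Set α)
    {s : Finset ι} {p : ι → ℕ} {i₀ : ι} {ℓ : ℕ} (hi₀ : i₀ ∈ s)
    (hgap : ∀ j ∈ s.erase i₀, p i₀ + ℓ ≤ p j) :
    (⋂ i ∈ s, T^[p i] ⁻¹' f i) ⊆
      T^[p i₀] ⁻¹' (f i₀ ∩ T^[ℓ] ⁻¹' ⋂ j ∈ s.erase i₀, T^[p j - (p i₀ + ℓ)] ⁻¹' f j) := by
  intro x hx
  simp only [Set.mem_iInter₂, Set.mem_preimage] at hx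
  refine ⟨hx i₀ hi₀, Set.mem_iInter₂.2 fun j hj => ?_⟩
  simp only [Set.mem_preimage, ← Function.iterate_add_apply]
  convert hx j (Finset.mem_of_mem_erase hj) using 3
  have := hgap j hj
  omega

section Atoms

variable {A : Type*} [MeasurableSpace A]

/-- The measurable hull of `cyl w`; `cyl w` itself need not be measurable, as the singletons of
`A` need not be. -/
def atomCyl {n : ℕ} (w : Fin n → A) : Set (ℕ → A) :=
  {x | ∀ i : Fin n, x i ∈ measurableAtom (w i)}

theorem cyl_subset_atomCyl {n : ℕ} (w : Fin n → A) : cyl w ⊆ atomCyl w := fun x hx i => by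
  rw [hx i]
  exact mem_measurableAtom_self _

theorem measurableSet_atomCyl [Countable A] {n : ℕ} (w : Fin n → A) :
    MeasurableSet (atomCyl w) := by
  have : atomCyl w = ⋂ i : Fin n, (fun x : ℕ → A => x i) ⁻¹' measurableAtom (w i) := by
    ext x
    simp [atomCyl]
  rw [this]
  exact MeasurableSet.iInter fun i =>
    measurable_pi_apply _ (MeasurableSet.measurableAtom_of_countable _)

theorem atomCyl_eq_of_mem {n : ℕ} {w : Fin n → A} {x : ℕ → A} (hx : x ∈ atomCyl w) :
    atomCyl w = atomCyl (fun i : Fin n => x i) := by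
  ext z
  simp only [atomCyl, Set.mem_ofPred_eq, measurableAtom_eq_of_mem (hx _)]

theorem atomCyl_append {n t : ℕ} (u : Fin n → A) (v : Fin t → A) :
    atomCyl (Fin.append u v) = atomCyl u ∩ shift^[n] ⁻¹' atomCyl v := by
  ext x
  simp only [atomCyl, Set.mem_inter_iff, Set.mem_preimage, Set.mem_ofPred_eq,
    shift_iterate_apply, Fin.forall_fin_add, Fin.append_left, Fin.append_right,
    Fin.val_castAdd, Fin.val_natAdd]

theorem subset_preimage_atomCyl {n q Q : ℕ} (hQ : q + n ≤ Q) {v : Fin n → A} {x : ℕ → A}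
    (hx : x ∈ shift^[q] ⁻¹' atomCyl v) :
    atomCyl (fun i : Fin Q => x i) ⊆ shift^[q] ⁻¹' atomCyl v := by
  intro z hz i
  simp only [Set.mem_preimage, atomCyl, Set.mem_ofPred_eq, shift_iterate_apply] at hx hz ⊢
  exact measurableAtom_subset_of_mem (hx i) (hz ⟨q + i, by omega⟩)

theorem measure_atomCyl (μ : Measure (ℕ → A)) {n : ℕ} (w : Fin n → A) :
    μ (atomCyl w) = μ (cyl w) := by
  refine le_antisymm ?_ (measure_mono (cyl_subset_atomCyl w))
  calc μ (atomCyl w) ≤ μ (toMeasurable μ (cyl w)) := measure_mono fun x hx => by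
        let z : ℕ → A := fun i => if h : i < n then w ⟨i, h⟩ else x i
        have hz : z ∈ cyl w := fun i => dif_pos i.isLt
        refine mem_of_mem_measurableAtom (mem_measurableAtom_of_forall fun i => ?_)
          (measurableSet_toMeasurable μ _) (subset_toMeasurable μ _ hz)
        by_cases h : i < n
        · simpa [z, h] using hx ⟨i, h⟩
        · simp [z, h]
    _ = μ (cyl w) := measure_toMeasurable _

end Atoms

section Decoupling

variable {A : Type*} [MeasurableSpace A] {μ : Measure (ℕ → A)} {k : ℕ → ℝ}

theorem ofReal_wp [IsFiniteMeasure μ] {n : ℕ} (a : Fin n → A) :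
    ENNReal.ofReal (wp μ a) = μ (cyl a) :=
  ENNReal.ofReal_toReal (measure_ne_top μ _)

theorem wp_nonneg (μ : Measure (ℕ → A)) {n : ℕ} (a : Fin n → A) : 0 ≤ wp μ a :=
  ENNReal.toReal_nonneg

theorem CondID.measure_cyl_append_le [IsFiniteMeasure μ] (hstat : MeasurePreserving shift μ μ)
    (hID : CondID μ k) {n t : ℕ} (u : Fin n → A) (v : Fin t → A) :
    μ (cyl (Fin.append u v)) ≤ ENNReal.ofReal (Real.exp (k n)) * (μ (cyl u) * μ (cyl v)) := by
  have hsplit : μ (cyl (Fin.append u v)) ≤ μ (cyl u) ∧ μ (cyl (Fin.append u v)) ≤ μ (cyl v) := by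
    simp only [← measure_atomCyl μ, atomCyl_append]
    exact ⟨measure_mono Set.inter_subset_left, (measure_mono Set.inter_subset_right).trans
      (measure_preimage_shift_iterate_le hstat n _)⟩
  by_cases hu : μ (cyl u) = 0
  · simpa [hu] using hsplit.1
  by_cases hv : μ (cyl v) = 0
  · simpa [hv] using hsplit.2
  have h := (hID.2.2 n t u v (pos_iff_ne_zero.2 hu) (pos_iff_ne_zero.2 hv)).1
  rw [← ofReal_wp, ← ofReal_wp, ← ofReal_wp, ← ENNReal.ofReal_mul (wp_nonneg μ u),
    ← ENNReal.ofReal_mul (Real.exp_pos _).le]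
  exact ENNReal.ofReal_le_ofReal h

/-- `F` is a finite disjoint union of measurable hulls of cylinders of length `Q`, to each of
which (ID) applies. -/
theorem CondID.measure_atomCyl_inter_preimage_le [Fintype A] [IsFiniteMeasure μ]
    (hstat : MeasurePreserving shift μ μ) (hID : CondID μ k) {n Q : ℕ} (w : Fin n → A)
    {F : Set (ℕ → A)} (hF : ∀ x ∈ F, atomCyl (fun i : Fin Q => x i) ⊆ F) :
    μ (atomCyl w ∩ shift^[n] ⁻¹' F) ≤ ENNReal.ofReal (Real.exp (k n)) * (μ (cyl w) * μ F) := by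
  set cells : Finset (Set (ℕ → A)) :=
    (Finset.univ.filter fun ρ : Fin Q → A => atomCyl ρ ⊆ F).image atomCyl
  have hFcells : F = ⋃ P ∈ cells, P := by
    refine subset_antisymm (fun x hx => ?_) (Set.iUnion₂_subset fun P hP => ?_)
    · refine Set.mem_biUnion (x := atomCyl fun i : Fin Q => x i) ?_
        fun i => mem_measurableAtom_self _
      exact Finset.mem_image_of_mem _ (Finset.mem_filter.2 ⟨Finset.mem_univ _, hF x hx⟩)
    · obtain ⟨ρ, hρ, rfl⟩ := Finset.mem_image.1 hP
      exact (Finset.mem_filter.1 hρ).2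
  have hdisj : (cells : Set (Set (ℕ → A))).PairwiseDisjoint id := by
    intro P hP P' hP' hne
    obtain ⟨ρ, -, rfl⟩ := Finset.mem_image.1 hP
    obtain ⟨ρ', -, rfl⟩ := Finset.mem_image.1 hP'
    exact Set.disjoint_left.2 fun x hx hx' =>
      hne ((atomCyl_eq_of_mem hx).trans (atomCyl_eq_of_mem hx').symm)
  calc μ (atomCyl w ∩ shift^[n] ⁻¹' F) = μ (⋃ P ∈ cells, atomCyl w ∩ shift^[n] ⁻¹' P) := by
        rw [← Set.inter_iUnion₂, ← Set.preimage_iUnion₂, ← hFcells]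
    _ ≤ ∑ P ∈ cells, μ (atomCyl w ∩ shift^[n] ⁻¹' P) := measure_biUnion_finset_le _ _
    _ ≤ ∑ P ∈ cells, ENNReal.ofReal (Real.exp (k n)) * (μ (cyl w) * μ P) := by
        refine Finset.sum_le_sum fun P hP => ?_
        obtain ⟨ρ, -, rfl⟩ := Finset.mem_image.1 hP
        rw [← atomCyl_append, measure_atomCyl, measure_atomCyl]
        exact hID.measure_cyl_append_le hstat w ρ
    _ = ENNReal.ofReal (Real.exp (k n)) * (μ (cyl w) * μ F) := by
        rw [← Finset.mul_sum, ← Finset.mul_sum, hFcells]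
        congr 2
        refine (measure_biUnion_finset hdisj fun P hP => ?_).symm
        obtain ⟨ρ, -, rfl⟩ := Finset.mem_image.1 hP
        exact measurableSet_atomCyl ρ

theorem CondID.measure_iInter_preimage_atomCyl_le [Fintype A] [IsProbabilityMeasure μ]
    (hstat : MeasurePreserving shift μ μ) (hID : CondID μ k) {ι : Type*} {ℓ : ℕ}
    (w : ι → Fin ℓ → A) (s : Finset ι) (p : ι → ℕ)
    (hsep : (s : Set ι).Pairwise fun i j => p i + ℓ ≤ p j ∨ p j + ℓ ≤ p i) :
    μ (⋂ i ∈ s, shift^[p i] ⁻¹' atomCyl (w i)) ≤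
      ∏ i ∈ s, ENNReal.ofReal (Real.exp (k ℓ)) * μ (cyl (w i)) := by
  induction s using Finset.strongInduction generalizing p with
  | H s ih =>
  rcases s.eq_empty_or_nonempty with rfl | hs
  · simp
  obtain ⟨i₀, hi₀, hmin⟩ := s.exists_min_image p hs
  have hgap : ∀ j ∈ s.erase i₀, p i₀ + ℓ ≤ p j := fun j hj => by
    have := hsep hi₀ (Finset.mem_of_mem_erase hj) (Finset.ne_of_mem_erase hj).symm
    have := hmin j (Finset.mem_of_mem_erase hj)
    omega
  -- the remaining words, seen from the end of the first one
  set p' : ι → ℕ := fun j => p j - (p i₀ + ℓ)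
  set F := ⋂ j ∈ s.erase i₀, shift^[p' j] ⁻¹' atomCyl (w j)
  have hF : ∀ x ∈ F, atomCyl (fun i : Fin ((s.erase i₀).sup p' + ℓ) => x i) ⊆ F :=
    fun x hx => Set.subset_iInter₂ fun j hj => subset_preimage_atomCyl
      (Nat.add_le_add_right (Finset.le_sup hj) ℓ) (Set.mem_iInter₂.1 hx j hj)
  have hsep' : ((s.erase i₀ : Finset ι) : Set ι).Pairwise
      fun i j => p' i + ℓ ≤ p' j ∨ p' j + ℓ ≤ p' i := fun i hi j hj hij => by
    have := hsep (Finset.mem_of_mem_erase hi) (Finset.mem_of_mem_erase hj) hij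
    have := hgap i hi
    have := hgap j hj
    simp only [p']
    omega
  calc μ (⋂ i ∈ s, shift^[p i] ⁻¹' atomCyl (w i))
      ≤ μ (atomCyl (w i₀) ∩ shift^[ℓ] ⁻¹' F) :=
        (measure_mono (iInter_preimage_iterate_subset shift _ hi₀ hgap)).trans
          (measure_preimage_shift_iterate_le hstat _ _)
    _ ≤ ENNReal.ofReal (Real.exp (k ℓ)) * (μ (cyl (w i₀)) * μ F) :=
        hID.measure_atomCyl_inter_preimage_le hstat _ hF
    _ ≤ ENNReal.ofReal (Real.exp (k ℓ)) * (μ (cyl (w i₀)) *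
          ∏ i ∈ s.erase i₀, ENNReal.ofReal (Real.exp (k ℓ)) * μ (cyl (w i))) := by
        gcongr
        exact ih _ (Finset.erase_ssubset hi₀) p' hsep'
    _ = ∏ i ∈ s, ENNReal.ofReal (Real.exp (k ℓ)) * μ (cyl (w i)) := by
        rw [← mul_assoc, Finset.mul_prod_erase s
          (fun i => ENNReal.ofReal (Real.exp (k ℓ)) * μ (cyl (w i))) hi₀]

end Decoupling

section UnionBound

variable {A : Type*} [MeasurableSpace A] {μ : Measure (ℕ → A)} {k : ℕ → ℝ}

theorem CondID.measure_iInter_matchAt_le [Fintype A] [IsProbabilityMeasure μ]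
    (hstat : MeasurePreserving shift μ μ) (hID : CondID μ k) {ι : Type*} {ℓ : ℕ}
    (w : ι → Fin ℓ → A) (s : Finset ι) (p : ι → ℕ)
    (hsep : (s : Set ι).Pairwise fun i j => p i + ℓ ≤ p j ∨ p j + ℓ ≤ p i) :
    μ (⋂ i ∈ s, {x | matchAt x (w i) (p i)}) ≤
      ∏ i ∈ s, ENNReal.ofReal (Real.exp (k ℓ)) * μ (cyl (w i)) := by
  refine (measure_mono (Set.iInter₂_mono fun i _ => ?_)).trans
    (hID.measure_iInter_preimage_atomCyl_le hstat w s p hsep)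
  rw [setOf_matchAt_eq_preimage]
  exact Set.preimage_mono (cyl_subset_atomCyl _)

/-- Distinct words of the same length cannot occur at the same position, so it suffices to
sum the decoupling bound over the injective choices of the slots `r`. -/
theorem CondID.measure_iInter_exists_matchAt_le [Fintype A] [IsProbabilityMeasure μ]
    (hstat : MeasurePreserving shift μ μ) (hID : CondID μ k) {ι : Type*} {ℓ : ℕ}
    (w : ι → Fin ℓ → A) (S : Finset ι) (hw : Set.InjOn w S) (c R : ℕ) {B : ℝ≥0∞}
    (hB : ∀ j ∈ S, ENNReal.ofReal (Real.exp (k ℓ)) * μ (cyl (w j)) ≤ B) :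
    μ (⋂ j ∈ S, {x | ∃ r < R, matchAt x (w j) (c + r * ℓ)}) ≤ (R * B) ^ S.card := by
  set M : (S → Fin R) → Set (ℕ → A) :=
    fun φ => ⋂ j : S, {x | matchAt x (w j) (c + φ j * ℓ)}
  have hcover : (⋂ j ∈ S, {x | ∃ r < R, matchAt x (w j) (c + r * ℓ)}) ⊆ ⋃ φ, M φ := by
    intro x hx
    simp only [Set.mem_iInter₂, Set.mem_ofPred_eq] at hx
    choose r hr hmatch using fun j : S => hx j j.2
    exact Set.mem_iUnion.2 ⟨fun j => ⟨r j, hr j⟩, Set.mem_iInter.2 hmatch⟩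
  have hM : ∀ φ, μ (M φ) ≤ B ^ S.card := by
    intro φ
    by_cases hφ : Function.Injective φ
    · have hsep : ((Finset.univ : Finset S) : Set S).Pairwise fun i j =>
          c + φ i * ℓ + ℓ ≤ c + φ j * ℓ ∨ c + φ j * ℓ + ℓ ≤ c + φ i * ℓ := by
        intro i _ j _ hij
        rcases lt_or_gt_of_ne (Fin.val_ne_of_ne (hφ.ne hij)) with h | h
        · left; nlinarith
        · right; nlinarith
      calc μ (M φ) = μ (⋂ j ∈ (Finset.univ : Finset S), {x | matchAt x (w j) (c + φ j * ℓ)}) := by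
            simp only [M, Finset.mem_univ, Set.iInter_true]
        _ ≤ ∏ j : S, ENNReal.ofReal (Real.exp (k ℓ)) * μ (cyl (w j)) :=
            hID.measure_iInter_matchAt_le hstat (fun j : S => w j) _ _ hsep
        _ ≤ ∏ _j : S, B := Finset.prod_le_prod' fun j _ => hB j j.2
        _ = B ^ S.card := by simp
    · obtain ⟨a, b, hab, hne⟩ := Function.not_injective_iff.1 hφ
      suffices M φ = ∅ by simp [this]
      refine Set.eq_empty_of_forall_notMem fun x hx => hne (Subtype.ext (hw a.2 b.2 ?_))
      simp only [M, Set.mem_iInter, Set.mem_ofPred_eq, matchAt] at hx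
      funext i
      rw [← hx a i, ← hx b i, hab]
  calc μ (⋂ j ∈ S, {x | ∃ r < R, matchAt x (w j) (c + r * ℓ)})
      ≤ ∑ φ, μ (M φ) := (measure_mono hcover).trans (measure_iUnion_fintype_le μ M)
    _ ≤ ∑ _φ : S → Fin R, B ^ S.card := Finset.sum_le_sum fun φ _ => hM φ
    _ = (R * B) ^ S.card := by simp [mul_pow]

end UnionBound

theorem measure_le_card_filter_le {Ω ι : Type*} [MeasurableSpace Ω] (μ : Measure Ω)
    (J : Finset ι) (E : ι → Set Ω) (m : ℕ) {b : ℝ≥0∞}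
    (hb : ∀ S ⊆ J, S.card = m → μ (⋂ j ∈ S, E j) ≤ b) :
    μ {x | m ≤ (J.filter fun j => x ∈ E j).card} ≤ J.card.choose m * b := by
  calc μ {x | m ≤ (J.filter fun j => x ∈ E j).card}
      ≤ μ (⋃ S ∈ J.powersetCard m, ⋂ j ∈ S, E j) := measure_mono fun x hx => by
        obtain ⟨S, hS, hcard⟩ := Finset.exists_subset_card_eq hx
        refine Set.mem_biUnion (Finset.mem_powersetCard.2 ⟨hS.trans (Finset.filter_subset _ _),
          hcard⟩) (Set.mem_iInter₂.2 fun j hj => (Finset.mem_filter.1 (hS hj)).2)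
    _ ≤ ∑ S ∈ J.powersetCard m, μ (⋂ j ∈ S, E j) := measure_biUnion_finset_le _ _
    _ ≤ ∑ S ∈ J.powersetCard m, b := Finset.sum_le_sum fun S hS =>
        hb S (Finset.mem_powersetCard.1 hS).1 (Finset.mem_powersetCard.1 hS).2
    _ = J.card.choose m * b := by rw [Finset.sum_const, Finset.card_powersetCard, nsmul_eq_mul]

section BlockParsing

variable {A : Type*} [MeasurableSpace A] {μ : Measure (ℕ → A)} {θ : ℝ} {e q : ℕ} {y : ℕ → A}

def blkWordsOfLength (μ : Measure (ℕ → A)) (θ : ℝ) (e : ℕ) (y : ℕ → A) (q ℓ : ℕ) : Finset ℕ :=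
  (Finset.range (dCount μ θ e y q)).filter fun j => blkLen μ θ e y (blkPos μ θ e y q j) = ℓ

theorem blkLen_spec {j : ℕ} (hj : j < dCount μ θ e y q) :
    1 ≤ blkLen μ θ e y (blkPos μ θ e y q j) ∧
    blkPos μ θ e y q j + blkLen μ θ e y (blkPos μ θ e y q j) ≤ e ∧
    wp μ (seg y (blkPos μ θ e y q j) (blkLen μ θ e y (blkPos μ θ e y q j))) ≤ θ := by
  have hne : blkLen μ θ e y (blkPos μ θ e y q j) ≠ 0 := by
    simpa using Nat.notMem_of_lt_sInf hj
  refine Nat.sInf_mem (s := {ℓ | 1 ≤ ℓ ∧ blkPos μ θ e y q j + ℓ ≤ e ∧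
    wp μ (seg y (blkPos μ θ e y q j) ℓ) ≤ θ}) (Set.nonempty_iff_ne_empty.2 fun h => hne ?_)
  rw [blkLen, h, Nat.sInf_empty]

theorem blkPos_eq_add_sum (μ : Measure (ℕ → A)) (θ : ℝ) (e : ℕ) (y : ℕ → A) (q j : ℕ) :
    blkPos μ θ e y q j = q + ∑ i ∈ Finset.range j, blkLen μ θ e y (blkPos μ θ e y q i) := by
  induction j with
  | zero => simp [blkPos]
  | succ j ih => rw [Finset.sum_range_succ, ← add_assoc, ← ih, blkPos]

theorem mul_card_blkWordsOfLength_le (μ : Measure (ℕ → A)) (θ : ℝ) (e : ℕ) (y : ℕ → A)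
    (q ℓ : ℕ) : ℓ * (blkWordsOfLength μ θ e y q ℓ).card ≤ e - q := by
  set d := dCount μ θ e y q
  rcases Nat.eq_zero_or_pos d with hd | hd
  · simp [blkWordsOfLength, d, hd]
  have hend : blkPos μ θ e y q d ≤ e := by
    obtain ⟨-, h, -⟩ := blkLen_spec (show d - 1 < dCount μ θ e y q by omega)
    rwa [show d = d - 1 + 1 by omega, blkPos]
  calc ℓ * (blkWordsOfLength μ θ e y q ℓ).card
      = ∑ j ∈ blkWordsOfLength μ θ e y q ℓ, blkLen μ θ e y (blkPos μ θ e y q j) := by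
        rw [Finset.sum_const_nat (s := blkWordsOfLength μ θ e y q ℓ) fun j hj =>
          (Finset.mem_filter.1 hj).2, mul_comm]
    _ ≤ ∑ j ∈ Finset.range d, blkLen μ θ e y (blkPos μ θ e y q j) :=
        Finset.sum_le_sum_of_subset (Finset.filter_subset _ _)
    _ ≤ e - q := by
        have := blkPos_eq_add_sum μ θ e y q d
        omega

theorem GoodBlock.injOn_seg (h : GoodBlock μ θ e y q) (ℓ : ℕ) :
    Set.InjOn (fun j => seg y (blkPos μ θ e y q j) ℓ) (blkWordsOfLength μ θ e y q ℓ) := by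
  intro i hi j hj hij
  simp only [blkWordsOfLength, Finset.coe_filter, Finset.mem_range, Set.mem_ofPred_eq] at hi hj
  refine h i j hi.1 hj.1 (hi.2.trans hj.2.symm) fun t ht => ?_
  rw [hi.2] at ht
  exact congrFun hij ⟨t, ht⟩

theorem measure_cyl_seg_pos (hstat : MeasurePreserving shift μ μ) (hy : y ∈ suppSet μ)
    (p n : ℕ) : 0 < μ (cyl (seg y p n)) := by
  have hsub : cyl (seg y 0 (p + n)) ⊆ shift^[p] ⁻¹' cyl (seg y p n) := fun x hx i => by
    simpa [seg, shift_iterate_apply] using hx ⟨p + i, by omega⟩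
  exact (hy (p + n)).trans_le ((measure_mono hsub).trans
    (measure_preimage_shift_iterate_le hstat p _))

theorem wp_seg_anti [IsFiniteMeasure μ] (p : ℕ) {ℓ n : ℕ} (h : ℓ ≤ n) :
    wp μ (seg y p n) ≤ wp μ (seg y p ℓ) :=
  ENNReal.toReal_mono (measure_ne_top _ _) (measure_mono fun x hx i => by
    simpa [seg] using hx ⟨i, i.isLt.trans_le h⟩)

end BlockParsing

theorem eventually_le_log_natCast (C : ℝ) : ∀ᶠ N : ℕ in atTop, C ≤ Real.log N :=
  (Real.tendsto_log_atTop.comp tendsto_natCast_atTop_atTop).eventually_ge_atTop C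

section LengthBounds

variable {A : Type*} [MeasurableSpace A] {μ : Measure (ℕ → A)} {y : ℕ → A} {ε : ℝ}

/-- The proper prefix of a parsed word is heavier than `N^{-1-ε}`, while (FE) makes long
words light. -/
theorem CondFE.eventually_blkLen_le_ellPlus [IsFiniteMeasure μ] {γp : ℝ}
    (hstat : MeasurePreserving shift μ μ) (hFE : CondFE μ γp) (hy : y ∈ suppSet μ)
    (hε : ε < 1) :
    ∀ᶠ N : ℕ in atTop, ∀ e q j, j < dCount μ ((N : ℝ) ^ (-1 - ε)) e y q →
      (blkLen μ ((N : ℝ) ^ (-1 - ε)) e y (blkPos μ ((N : ℝ) ^ (-1 - ε)) e y q j) : ℝ) ≤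
        ellPlus N γp := by
  obtain ⟨hγp, hdecay⟩ := hFE
  obtain ⟨n₀, hn₀⟩ := eventually_atTop.1 hdecay
  filter_upwards [eventually_le_log_natCast ((n₀ + 1) * -γp / 2),
    eventually_le_log_natCast (-γp / (1 - ε)), eventually_gt_atTop 0] with N hN₁ hN₂ hN
  intro e q j hj
  set θ := (N : ℝ) ^ (-1 - ε)
  set p := blkPos μ θ e y q j
  set ℓ := blkLen μ θ e y p
  rw [ellPlus, le_div_iff₀ (neg_pos.2 hγp)]
  by_cases hℓ : ℓ ≤ n₀ + 1
  · have : (ℓ : ℝ) ≤ n₀ + 1 := by exact_mod_cast hℓ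
    nlinarith
  have hend : p + ℓ ≤ e := (blkLen_spec hj).2.1
  have hmin : ¬(1 ≤ ℓ - 1 ∧ p + (ℓ - 1) ≤ e ∧ wp μ (seg y p (ℓ - 1)) ≤ θ) :=
    Nat.notMem_of_lt_sInf (show ℓ - 1 < ℓ by omega)
  have hpre : θ < wp μ (seg y p (ℓ - 1)) :=
    not_le.1 fun h => hmin ⟨by omega, by omega, h⟩
  have hfe := hn₀ (ℓ - 1) (by omega) _ (measure_cyl_seg_pos hstat hy p (ℓ - 1))
  have hlt : Real.log N * (-1 - ε) < γp * ((ℓ - 1 : ℕ) : ℝ) := by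
    rw [← Real.exp_lt_exp, ← Real.rpow_def_of_pos (by exact_mod_cast hN)]
    exact hpre.trans_le hfe
  rw [Nat.cast_sub (by omega), Nat.cast_one] at hlt
  rw [div_le_iff₀ (by linarith)] at hN₂
  linarith

/-- A parsed word has probability at most `N^{-1-ε} ≤ N^{-1}`, while (SE) makes short words
heavy. -/
theorem CondSE.eventually_two_mul_ellMinus_le_blkLen [IsFiniteMeasure μ] {γm : ℝ}
    (hstat : MeasurePreserving shift μ μ) (hSE : CondSE μ γm) (hy : y ∈ suppSet μ)
    (hε : 0 ≤ ε) :
    ∀ᶠ N : ℕ in atTop, ∀ e q j, j < dCount μ ((N : ℝ) ^ (-1 - ε)) e y q →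
      2 * ellMinus N γm ≤
        (blkLen μ ((N : ℝ) ^ (-1 - ε)) e y (blkPos μ ((N : ℝ) ^ (-1 - ε)) e y q j) : ℝ) := by
  obtain ⟨hγm, hdecay⟩ := hSE
  obtain ⟨n₀, hn₀⟩ := eventually_atTop.1 hdecay
  filter_upwards [eventually_le_log_natCast ((n₀ + 1) * -γm), eventually_gt_atTop 0]
    with N hN₁ hN
  intro e q j hj
  set θ := (N : ℝ) ^ (-1 - ε)
  set p := blkPos μ θ e y q j
  set ℓ := blkLen μ θ e y p
  obtain ⟨-, -, hθ⟩ := blkLen_spec hj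
  have hlog : 0 ≤ Real.log N := Real.log_natCast_nonneg N
  set n := max ℓ n₀
  have hle : γm * n ≤ Real.log N * (-1 - ε) := by
    rw [← Real.exp_le_exp, ← Real.rpow_def_of_pos (by exact_mod_cast hN)]
    exact (hn₀ n (le_max_right _ _) _ (measure_cyl_seg_pos hstat hy p n)).trans
      ((wp_seg_anti p (le_max_left _ _)).trans hθ)
  have hn : (n₀ + 1 : ℝ) ≤ n := le_of_mul_le_mul_right (by nlinarith) (neg_pos.2 hγm)
  have hnℓ : n = ℓ := by
    have : n₀ + 1 ≤ n := by exact_mod_cast hn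
    omega
  rw [ellMinus, ← hnℓ, mul_div_assoc', div_le_iff₀ (by linarith)]
  nlinarith

end LengthBounds

theorem blockEnd_sub_blockStart_le (N : ℕ) (α : ℝ) (s : ℕ) :
    blockEnd N α s - blockStart N α s ≤ blockB N α := by
  rw [blockEnd, blockStart, Nat.succ_mul]
  generalize s * blockB N α = a
  omega

theorem card_blkWordsOfLength_le_dPlus {A : Type*} [MeasurableSpace A]
    {μ : Measure (ℕ → A)} {θ : ℝ} {y : ℕ → A} {N : ℕ} {α γm : ℝ} {s ℓ : ℕ}
    (hγm : γm < 0) (hN : 1 < N)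
    (hlow : ∀ j < dCount μ θ (blockEnd N α s) y (blockStart N α s), 2 * ellMinus N γm ≤
      (blkLen μ θ (blockEnd N α s) y (blkPos μ θ (blockEnd N α s) y (blockStart N α s) j) : ℝ)) :
    (blkWordsOfLength μ θ (blockEnd N α s) y (blockStart N α s) ℓ).card ≤
      ⌈dPlus N α γm⌉₊ := by
  set J := blkWordsOfLength μ θ (blockEnd N α s) y (blockStart N α s) ℓ
  rcases J.eq_empty_or_nonempty with hJ | ⟨j₀, hj₀⟩
  · simp [hJ]
  obtain ⟨hj₀d, hj₀ℓ⟩ := Finset.mem_filter.1 hj₀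
  have hℓ : 2 * ellMinus N γm ≤ ℓ := hj₀ℓ ▸ hlow j₀ (Finset.mem_range.1 hj₀d)
  have hellm : 0 < ellMinus N γm :=
    div_pos (Real.log_pos (by exact_mod_cast hN)) (by linarith)
  have hcount : (J.card : ℝ) * ℓ ≤ (N : ℝ) ^ α := by
    have h := (mul_card_blkWordsOfLength_le μ θ _ y _ ℓ).trans
      (blockEnd_sub_blockStart_le N α s)
    calc (J.card : ℝ) * ℓ = ((ℓ * J.card : ℕ) : ℝ) := by push_cast; ring
      _ ≤ blockB N α := by exact_mod_cast h
      _ ≤ (N : ℝ) ^ α := Nat.floor_le (by positivity)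
  have hJ : (J.card : ℝ) ≤ dPlus N α γm := by
    rw [dPlus, le_div_iff₀ hellm]
    nlinarith [mul_le_mul_of_nonneg_left hℓ (Nat.cast_nonneg J.card),
      Real.rpow_nonneg (Nat.cast_nonneg N) α]
  exact_mod_cast hJ.trans (Nat.le_ceil _)

theorem natCast_mul_pow_eq_ofReal (D m : ℕ) (a : ℝ) {N : ℕ} (hN : 0 < N) {ε : ℝ} :
    (D : ℝ≥0∞) * (N * ENNReal.ofReal (Real.exp a * (N : ℝ) ^ (-1 - ε))) ^ m =
      ENNReal.ofReal (D * Real.exp (m * a) * (N : ℝ) ^ (-(m * ε))) := by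
  have hN0 : (0 : ℝ) < N := by exact_mod_cast hN
  have hNθ : (N : ℝ) * (N : ℝ) ^ (-1 - ε) = (N : ℝ) ^ (-ε) := by
    rw [show -ε = 1 + (-1 - ε) by ring, Real.rpow_add hN0, Real.rpow_one]
  rw [← ENNReal.ofReal_natCast, ← ENNReal.ofReal_natCast N, ← ENNReal.ofReal_mul hN0.le,
    ← ENNReal.ofReal_pow (by positivity), ← ENNReal.ofReal_mul (by positivity)]
  congr 1
  rw [mul_left_comm, hNθ, mul_pow,
    ← Real.exp_nat_mul, ← Real.rpow_natCast, ← Real.rpow_mul hN0.le, mul_assoc]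
  ring_nf

theorem GoodBlock.measure_matchCount_le {A : Type*} [Fintype A] [MeasurableSpace A]
    {μ : Measure (ℕ → A)} [IsProbabilityMeasure μ] {k : ℕ → ℝ} {θ : ℝ} {e q : ℕ} {y : ℕ → A}
    (hstat : MeasurePreserving shift μ μ) (hID : CondID μ k) (hgood : GoodBlock μ θ e y q)
    (ℓ c R m : ℕ) {B : ℝ≥0∞}
    (hB : ∀ j ∈ blkWordsOfLength μ θ e y q ℓ,
      ENNReal.ofReal (Real.exp (k ℓ)) * μ (cyl (seg y (blkPos μ θ e y q j) ℓ)) ≤ B) :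
    μ {x | Set.ncard {j | j < dCount μ θ e y q ∧ blkLen μ θ e y (blkPos μ θ e y q j) = ℓ ∧
        ∃ r < R, ∀ i < ℓ, y (blkPos μ θ e y q j + i) = x (c + r * ℓ + i)} = m} ≤
      (blkWordsOfLength μ θ e y q ℓ).card.choose m * (R * B) ^ m := by
  set J := blkWordsOfLength μ θ e y q ℓ
  set E : ℕ → Set (ℕ → A) :=
    fun j => {x | ∃ r < R, matchAt x (seg y (blkPos μ θ e y q j) ℓ) (c + r * ℓ)}
  have hcount : ∀ x, {j | j < dCount μ θ e y q ∧ blkLen μ θ e y (blkPos μ θ e y q j) = ℓ ∧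
      ∃ r < R, ∀ i < ℓ, y (blkPos μ θ e y q j + i) = x (c + r * ℓ + i)} =
      ↑(J.filter fun j => x ∈ E j) := fun x => by
    ext j
    simp [J, E, blkWordsOfLength, matchAt_seg_iff, and_assoc]
  refine (measure_mono fun x hx => ?_).trans (measure_le_card_filter_le μ J E m
    fun S hS hcard => hcard ▸ hID.measure_iInter_exists_matchAt_le hstat _ S
      ((hgood.injOn_seg ℓ).mono hS) c R fun j hj => hB j (hS hj))
  simp only [Set.mem_ofPred_eq, hcount, Set.ncard_coe_finset] at hx ⊢
  -- the two sides differ only in the `Decidable` instances used by `filter`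
  exact le_of_eq (by convert hx.symm)

theorem m_words_match_prob_general {A : Type*} [Fintype A] [MeasurableSpace A]
    (μP : Measure (ℕ → A)) [IsProbabilityMeasure μP]
    (hPstat : MeasurePreserving shift μP μP)
    (kP : ℕ → ℝ) (γp γm : ℝ)
    (hPID : CondID μP kP) (hPFE : CondFE μP γp) (hPSE : CondSE μP γm)
    (ε α : ℝ) (hε : 0 < ε ∧ ε < 1 / 2)
    (y : ℕ → A) (hy : y ∈ suppSet μP) :
    ∀ᶠ N : ℕ in atTop, ∀ s : ℕ,
      GoodBlock μP ((N : ℝ) ^ (-1 - ε)) (blockEnd N α s) y (blockStart N α s) →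
      ∀ (ℓ K m : ℕ), 1 ≤ K → K ≤ ℓ →
        (μP {x | Set.ncard {j |
            j < dCount μP ((N : ℝ) ^ (-1 - ε)) (blockEnd N α s) y (blockStart N α s) ∧
            blkLen μP ((N : ℝ) ^ (-1 - ε)) (blockEnd N α s) y
              (blkPos μP ((N : ℝ) ^ (-1 - ε)) (blockEnd N α s) y (blockStart N α s) j) = ℓ ∧
            ∃ r < (N - K + 1) / ℓ, ∀ i < ℓ,
              y (blkPos μP ((N : ℝ) ^ (-1 - ε)) (blockEnd N α s) y (blockStart N α s) j + i) =
                x (K - 1 + r * ℓ + i)} = m}).toReal ≤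
          ((⌈dPlus N α γm⌉₊).choose m : ℝ) * Real.exp (m * kP ⌈ellPlus N γp⌉₊) *
            (N : ℝ) ^ (-(m * ε)) := by
  filter_upwards [hPFE.eventually_blkLen_le_ellPlus hPstat hy (by linarith [hε.2]),
    hPSE.eventually_two_mul_ellMinus_le_blkLen hPstat hy hε.1.le, eventually_gt_atTop 1]
    with N hup hlow hN
  intro s hgood ℓ K m hK _
  set θ := (N : ℝ) ^ (-1 - ε)
  set L := ⌈ellPlus N γp⌉₊
  have hB : ∀ j ∈ blkWordsOfLength μP θ (blockEnd N α s) y (blockStart N α s) ℓ,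
      ENNReal.ofReal (Real.exp (kP ℓ)) *
        μP (cyl (seg y (blkPos μP θ (blockEnd N α s) y (blockStart N α s) j) ℓ)) ≤
      ENNReal.ofReal (Real.exp (kP L) * θ) := fun j hj => by
    obtain ⟨hjd, rfl⟩ := Finset.mem_filter.1 hj
    have hL := Nat.cast_le.1 ((hup _ _ j (Finset.mem_range.1 hjd)).trans (Nat.le_ceil _))
    rw [ENNReal.ofReal_mul (Real.exp_pos _).le, ← ofReal_wp]
    gcongr
    exacts [hPID.1 hL, (blkLen_spec (Finset.mem_range.1 hjd)).2.2]
  refine ENNReal.toReal_le_of_le_ofReal (by positivity) ?_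
  calc _ ≤ _ := hgood.measure_matchCount_le hPstat hPID ℓ (K - 1) ((N - K + 1) / ℓ) m hB
    _ ≤ (⌈dPlus N α γm⌉₊.choose m : ℝ≥0∞) * (N * ENNReal.ofReal (Real.exp (kP L) * θ)) ^ m := by
        gcongr
        · exact card_blkWordsOfLength_le_dPlus hPSE.1 hN fun j hj => hlow _ _ j hj
        · exact (Nat.div_le_self _ _).trans (by omega)
    _ = _ := natCast_mul_pow_eq_ofReal _ _ _ (by omega)

/-- **Lemma 3.8.** In a good block, the probability that exactly `m` of its words match
`x_1^N` at positions `≡ K (mod ℓ)` is at most `binom(d₊, m) e^{m k_{ℓ₊}} N^{-mε}`. -/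
theorem m_words_match_prob {A : Type*} [Fintype A] [MeasurableSpace A]
    (μP : Measure (ℕ → A)) [IsProbabilityMeasure μP]
    (hPstat : MeasurePreserving shift μP μP)
    (kP : ℕ → ℝ) (γp γm : ℝ)
    (hPID : CondID μP kP) (hPFE : CondFE μP γp) (hPSE : CondSE μP γm)
    (ε α : ℝ) (hε : 0 < ε ∧ ε < 1 / 2) (hα : 0 < α ∧ α < γp / (8 * γm))
    (y : ℕ → A) (hy : y ∈ suppSet μP) :
    ∀ᶠ N : ℕ in atTop, ∀ s : ℕ,
      GoodBlock μP ((N : ℝ) ^ (-1 - ε)) (blockEnd N α s) y (blockStart N α s) →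
      ∀ (ℓ K m : ℕ), 1 ≤ K → K ≤ ℓ →
        (μP {x | Set.ncard {j |
            j < dCount μP ((N : ℝ) ^ (-1 - ε)) (blockEnd N α s) y (blockStart N α s) ∧
            blkLen μP ((N : ℝ) ^ (-1 - ε)) (blockEnd N α s) y
              (blkPos μP ((N : ℝ) ^ (-1 - ε)) (blockEnd N α s) y (blockStart N α s) j) = ℓ ∧
            ∃ r < (N - K + 1) / ℓ, ∀ i < ℓ,
              y (blkPos μP ((N : ℝ) ^ (-1 - ε)) (blockEnd N α s) y (blockStart N α s) j + i) =
                x (K - 1 + r * ℓ + i)} = m}).toReal ≤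
          ((⌈dPlus N α γm⌉₊).choose m : ℝ) * Real.exp (m * kP ⌈ellPlus N γp⌉₊) *
            (N : ℝ) ^ (-(m * ε)) :=
  m_words_match_prob_general μP hPstat kP γp γm hPID hPFE hPSE ε α hε y hy

end ZM
end
end

section
/- Let 𝒮 be a finite hidden alphabet, P an irreducible stochastic matrix on 𝒮 with stationary probability vector π, R a stochastic matrix from 𝒮 to the finite alphabet 𝒜 (each row of R sums to 1), and let ℙ be the associated stationary hidden-Markov measure on Ω = 𝒜^ℕ, determined by ℙ[a_1^n] = Σ_{s ∈ 𝒮^n} π_{s_1} R_{s_1,a_1} P_{s_1,s_2} R_{s_2,a_2} ⋯ P_{s_{n-1},s_n} R_{s_n,a_n} for all n ∈ ℕ and a_1^n ∈ 𝒜^n. Then ℙ satisfies condition FE if and only if for each s ∈ 𝒮 there exists L ∈ ℕ such that #{a ∈ 𝒜^L : ℙ[a | s_1 = s] > 0} > 1, where ℙ[a | s_1 = s] := Σ_{s_2,…,s_L ∈ 𝒮} R_{s,a_1} P_{s,s_2} R_{s_2,a_2} ⋯ P_{s_{L-1},s_L} R_{s_L,a_L}. -/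
open MeasureTheory Filter Asymptotics
open scoped ENNReal Classical

noncomputable section

namespace ZM

/-- The probability that a stationary hidden-Markov chain with data `(π, P, R)` emits the
word `a` of length `n + 1`. -/
def hmmProb {A S : Type*} [Fintype S] (π : S → ℝ) (P : Matrix S S ℝ) (R : S → A → ℝ)
    (n : ℕ) (a : Fin (n + 1) → A) : ℝ :=
  ∑ s : Fin (n + 1) → S,
    π (s 0) * (∏ i, R (s i) (a i)) * ∏ i : Fin n, P (s i.castSucc) (s i.succ)

/-- `ℙ[a | s_1 = s]`: the probability that the chain emits the word `a` of length `L + 1`,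
conditioned on the first hidden state being `s`. -/
def hmmCond {A S : Type*} [Fintype S] [DecidableEq S] (P : Matrix S S ℝ) (R : S → A → ℝ)
    (s : S) (L : ℕ) (a : Fin (L + 1) → A) : ℝ :=
  ∑ u : Fin (L + 1) → S, (if u 0 = s then (1 : ℝ) else 0) *
    (∏ i, R (u i) (a i)) * ∏ i : Fin L, P (u i.castSucc) (u i.succ)

section Lemma43Aux

variable {A S : Type*} [Fintype S] [Fintype A] [DecidableEq S]

/-- Probability of emitting the list `l` starting from hidden state `s`. -/
def gword (P : Matrix S S ℝ) (R : S → A → ℝ) : S → List A → ℝ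
  | _, [] => 1
  | s, a :: l => R s a * ∑ t, P s t * gword P R t l

/-- Weight of emitting the list `l` from `s` with final transition weight at `t`. -/
def Fmat (P : Matrix S S ℝ) (R : S → A → ℝ) : S → List A → S → ℝ
  | s, [], t => if s = t then 1 else 0
  | s, a :: l, t => R s a * ∑ u, P s u * Fmat P R u l t

variable {P : Matrix S S ℝ} {R : S → A → ℝ}
variable (hPnn : ∀ i j, 0 ≤ P i j) (hProw : ∀ i, ∑ j, P i j = 1)
variable (hRnn : ∀ s a, 0 ≤ R s a) (hRrow : ∀ s, ∑ a, R s a = 1)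

include hPnn hRnn in
lemma gword_nonneg (s : S) (l : List A) : 0 ≤ gword P R s l := by
  induction l generalizing s with
  | nil => exact zero_le_one
  | cons a l ih =>
    exact mul_nonneg (hRnn s a) (Finset.sum_nonneg fun t _ =>
      mul_nonneg (hPnn s t) (ih t))

include hPnn hRnn in
lemma Fmat_nonneg (s t : S) (l : List A) : 0 ≤ Fmat P R s l t := by
  induction l generalizing s with
  | nil => simp only [Fmat]; split <;> norm_num
  | cons a l ih =>
    exact mul_nonneg (hRnn s a) (Finset.sum_nonneg fun u _ =>
      mul_nonneg (hPnn s u) (ih u))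

lemma gword_append (s : S) (l₁ l₂ : List A) :
    gword P R s (l₁ ++ l₂) = ∑ t, Fmat P R s l₁ t * gword P R t l₂ := by
  induction l₁ generalizing s with
  | nil => simp [Fmat]
  | cons a l ih =>
    simp only [List.cons_append, gword, Fmat, List.append_eq, ih, Finset.mul_sum,
      Finset.sum_mul, mul_assoc]
    rw [Finset.sum_comm]

lemma Fmat_sum (s : S) (l : List A) : ∑ t, Fmat P R s l t = gword P R s l := by
  induction l generalizing s with
  | nil => simp [Fmat, gword]
  | cons a l ih =>
    simp only [Fmat, gword, ← Finset.mul_sum]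
    rw [Finset.sum_comm]
    simp only [← Finset.mul_sum, ih]

include hProw hRrow in
lemma gword_sum (s : S) (n : ℕ) :
    ∑ f : Fin n → A, gword P R s (List.ofFn f) = 1 := by
  induction n generalizing s with
  | zero => simp [gword]
  | succ n ih =>
    rw [← (Fin.consEquiv (fun _ : Fin (n+1) => A)).sum_comp
      (fun f => gword P R s (List.ofFn f)), Fintype.sum_prod_type]
    have : ∀ (a : A) (v : Fin n → A),
        List.ofFn (Fin.consEquiv (fun _ : Fin (n+1) => A) (a, v)) = a :: List.ofFn v := by
      intro a v
      rw [List.ofFn_succ]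
      simp [Fin.consEquiv]
    simp only [this, gword]
    have key : ∀ a : A,
        ∑ v : Fin n → A, (R s a * ∑ t, P s t * gword P R t (List.ofFn v)) = R s a := by
      intro a
      rw [← Finset.mul_sum, Finset.sum_comm]
      simp only [← Finset.mul_sum, ih, mul_one, hProw, hRrow]
    simp only [key, hRrow]

include hPnn hProw hRnn hRrow in
lemma gword_le_one (s : S) (l : List A) : gword P R s l ≤ 1 := by
  have h := gword_sum hProw hRrow (P := P) s l.length
  have : gword P R s l = gword P R s (List.ofFn l.get) := by rw [List.ofFn_get]
  rw [this, ← h]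
  exact Finset.single_le_sum
    (fun f _ => gword_nonneg hPnn hRnn s (List.ofFn f)) (Finset.mem_univ _)

include hPnn hProw hRnn hRrow in
lemma gword_pair_le_one (s : S) {n : ℕ} {f g : Fin n → A} (hfg : f ≠ g) :
    gword P R s (List.ofFn f) + gword P R s (List.ofFn g) ≤ 1 := by
  classical
  have h := gword_sum hProw hRrow (P := P) s n
  rw [← h, ← Finset.sum_pair hfg (f := fun x => gword P R s (List.ofFn x))]
  exact Finset.sum_le_sum_of_subset_of_nonneg (Finset.subset_univ _)
    (fun i _ _ => gword_nonneg hPnn hRnn s (List.ofFn i))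

include hPnn hProw hRnn hRrow in
lemma exists_extension (s : S) (l : List A) (h : 0 < gword P R s l) (m : ℕ) :
    ∃ v : Fin m → A, 0 < gword P R s (l ++ List.ofFn v) := by
  by_contra hc
  push_neg at hc
  have h0 : ∀ v : Fin m → A, gword P R s (l ++ List.ofFn v) = 0 := fun v =>
    le_antisymm (hc v) (gword_nonneg hPnn hRnn s _)
  have hsum : ∑ v : Fin m → A, gword P R s (l ++ List.ofFn v) = gword P R s l := by
    rw [Finset.sum_congr rfl fun v _ => gword_append s l (List.ofFn v), Finset.sum_comm]
    simp_rw [← Finset.mul_sum]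
    simp only [gword_sum hProw hRrow, mul_one, Fmat_sum]
  rw [Finset.sum_congr rfl fun v _ => h0 v, Finset.sum_const, smul_zero] at hsum
  exact absurd hsum.symm (ne_of_gt h)

include hPnn hProw hRnn hRrow in
lemma gword_decay {L : ℕ} {c : ℝ} (hc0 : 0 ≤ c)
    (hcb : ∀ (s : S) (l : List A), l.length = L + 1 → gword P R s l ≤ c) :
    ∀ (n : ℕ) (l : List A), l.length = n → ∀ s, gword P R s l ≤ c ^ (n / (L + 1)) := by
  intro n
  induction n using Nat.strong_induction_on with
  | _ n ih =>
    intro l hl s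
    by_cases h : n < L + 1
    · rw [Nat.div_eq_of_lt h, pow_zero]
      exact gword_le_one hPnn hProw hRnn hRrow s l
    · push_neg at h
      have hsplit : l = l.take (L+1) ++ l.drop (L+1) := (List.take_append_drop _ _).symm
      have htk : (l.take (L+1)).length = L + 1 := by
        rw [List.length_take]; omega
      have hdr : (l.drop (L+1)).length = n - (L+1) := by
        rw [List.length_drop]; omega
      have hdiv : n / (L + 1) = (n - (L+1)) / (L + 1) + 1 :=
        Nat.div_eq_sub_div (by omega) h
      rw [hsplit, gword_append, hdiv, pow_succ]
      calc ∑ t, Fmat P R s (l.take (L+1)) t * gword P R t (l.drop (L+1))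
          ≤ ∑ t, Fmat P R s (l.take (L+1)) t * c ^ ((n - (L+1)) / (L + 1)) := by
            refine Finset.sum_le_sum fun t _ => ?_
            exact mul_le_mul_of_nonneg_left
              (ih (n - (L+1)) (by omega) _ hdr t) (Fmat_nonneg hPnn hRnn s t _)
        _ = gword P R s (l.take (L+1)) * c ^ ((n - (L+1)) / (L + 1)) := by
            rw [← Finset.sum_mul, Fmat_sum]
        _ ≤ c * c ^ ((n - (L+1)) / (L + 1)) :=
            mul_le_mul_of_nonneg_right (hcb s _ htk) (pow_nonneg hc0 _)
        _ = c ^ ((n - (L+1)) / (L + 1)) * c := mul_comm _ _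

omit hPnn hProw hRnn hRrow in
lemma ofFn_of_length {l : List A} {n : ℕ} (hl : l.length = n) :
    List.ofFn (fun i : Fin n => l.get (Fin.cast hl.symm i)) = l := by
  apply List.ext_getElem
  · simp [hl]
  · intro i h1 h2
    simp [List.getElem_ofFn, List.get_eq_getElem, Fin.cast]

lemma hmmCond_zero (s : S) (a : Fin 1 → A) : hmmCond P R s 0 a = R s (a 0) := by
  rw [hmmCond, ← (Equiv.funUnique (Fin 1) S).symm.sum_comp]
  simp [Equiv.funUnique]

lemma hmmCond_succ (s : S) (L : ℕ) (a : Fin (L + 2) → A) :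
    hmmCond P R s (L + 1) a
      = R s (a 0) * ∑ t, P s t * hmmCond P R t L (fun i => a i.succ) := by
  rw [hmmCond, ← (Fin.consEquiv (fun _ : Fin (L+2) => S)).sum_comp, Fintype.sum_prod_type]
  simp only [Fin.consEquiv, Equiv.coe_fn_mk, Fin.cons_zero, Fin.cons_succ,
    Fin.prod_univ_succ, Fin.castSucc_zero, ← Fin.succ_castSucc]
  rw [Finset.sum_comm]
  have hRHS : R s (a 0) * ∑ t, P s t * hmmCond P R t L (fun i => a i.succ)
      = ∑ y : Fin (L+1) → S, R s (a 0) *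
          ((R (y 0) (a (Fin.succ 0)) * ∏ i : Fin L, R (y i.succ) (a i.succ.succ)) *
            (P s (y 0) * ∏ i : Fin L, P (y i.castSucc) (y i.succ))) := by
    simp only [hmmCond, Finset.mul_sum]
    rw [Finset.sum_comm]
    refine Finset.sum_congr rfl fun u _ => ?_
    rw [Finset.sum_eq_single (u 0)]
    · rw [Fin.prod_univ_succ]
      simp only [eq_self_iff_true, if_true]
      ring
    · intro b _ hb
      simp [Ne.symm hb]
    · simp
  rw [hRHS]
  refine Finset.sum_congr rfl fun y _ => ?_
  rw [Finset.sum_eq_single s]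
  · simp only [eq_self_iff_true, if_true]
    ring
  · intro b _ hb
    simp [hb]
  · simp

lemma hmmProb_eq_sum (π : S → ℝ) (n : ℕ) (a : Fin (n + 1) → A) :
    hmmProb π P R n a = ∑ s, π s * hmmCond P R s n a := by
  simp only [hmmCond, Finset.mul_sum]
  rw [Finset.sum_comm]
  refine Finset.sum_congr rfl fun u _ => ?_
  rw [Finset.sum_eq_single (u 0)]
  · simp [mul_assoc]
  · intro b _ hb
    simp [Ne.symm hb]
  · simp

include hProw in
lemma hmmCond_eq_gword (s : S) (L : ℕ) (a : Fin (L + 1) → A) :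
    hmmCond P R s L a = gword P R s (List.ofFn a) := by
  induction L generalizing s with
  | zero =>
    rw [hmmCond_zero, List.ofFn_succ]
    simp [gword, ← Finset.sum_mul, hProw]
  | succ L ih =>
    rw [hmmCond_succ, List.ofFn_succ]
    simp only [gword, ih]

include hPnn hRnn hProw in
lemma hmmCond_nonneg (s : S) (L : ℕ) (a : Fin (L + 1) → A) : 0 ≤ hmmCond P R s L a := by
  rw [hmmCond_eq_gword hProw]
  exact gword_nonneg hPnn hRnn s _

include hPnn hProw hRnn hRrow in
lemma hmmCond_sum (s : S) (L : ℕ) :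
    ∑ a : Fin (L + 1) → A, hmmCond P R s L a = 1 := by
  simp only [hmmCond_eq_gword hProw]
  exact gword_sum hProw hRrow s (L + 1)

lemma matpow_nonneg (hPnn : ∀ i j, 0 ≤ P i j) (m : ℕ) (i j : S) : 0 ≤ (P ^ m) i j := by
  induction m generalizing j with
  | zero => simp only [pow_zero, Matrix.one_apply]; split <;> norm_num
  | succ m ih =>
    rw [pow_succ, Matrix.mul_apply]
    exact Finset.sum_nonneg fun k _ => mul_nonneg (ih k) (hPnn k j)

lemma stat_pow {π : S → ℝ} (hπstat : ∀ j, ∑ i, π i * P i j = π j) (m : ℕ) (j : S) :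
    ∑ i, π i * (P ^ m) i j = π j := by
  induction m generalizing j with
  | zero =>
    simp only [pow_zero, Matrix.one_apply, mul_ite, mul_one, mul_zero]
    simp
  | succ m ih =>
    simp only [pow_succ, Matrix.mul_apply, Finset.mul_sum, ← mul_assoc]
    rw [Finset.sum_comm]
    simp only [← Finset.sum_mul, ih]
    exact hπstat j

lemma pi_pos {π : S → ℝ} (hPnn : ∀ i j, 0 ≤ P i j)
    (hπnn : ∀ i, 0 ≤ π i) (hπsum : ∑ i, π i = 1)
    (hπstat : ∀ j, ∑ i, π i * P i j = π j)
    (hirr : ∀ i j, ∃ m : ℕ, 1 ≤ m ∧ 0 < (P ^ m) i j) (i : S) : 0 < π i := by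
  obtain ⟨j, hj⟩ : ∃ j, 0 < π j := by
    by_contra hc
    push_neg at hc
    have : ∑ i, π i ≤ 0 := Finset.sum_nonpos fun i _ => hc i
    rw [hπsum] at this
    norm_num at this
  obtain ⟨m, -, hm⟩ := hirr j i
  have h1 : π j * (P ^ m) j i ≤ ∑ l, π l * (P ^ m) l i :=
    Finset.single_le_sum
      (fun l _ => mul_nonneg (hπnn l) (matpow_nonneg hPnn m l i)) (Finset.mem_univ j)
  rw [stat_pow hπstat] at h1
  exact lt_of_lt_of_le (mul_pos hj hm) h1

end Lemma43Aux

/-- **Lemma 4.3.** A stationary hidden-Markov measure (with irreducible hidden chain)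
satisfies (FE) iff from each hidden state, more than one word of some length can be
emitted. -/
theorem hmm_FE_iff {A S : Type*} [Fintype A] [MeasurableSpace A] [Fintype S] [DecidableEq S]
    (μ : Measure (ℕ → A)) [IsProbabilityMeasure μ]
    (π : S → ℝ) (P : Matrix S S ℝ) (R : S → A → ℝ)
    (hPnn : ∀ i j, 0 ≤ P i j) (hProw : ∀ i, ∑ j, P i j = 1)
    (hRnn : ∀ s a, 0 ≤ R s a) (hRrow : ∀ s, ∑ a, R s a = 1)
    (hπnn : ∀ i, 0 ≤ π i) (hπsum : ∑ i, π i = 1)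
    (hπstat : ∀ j, ∑ i, π i * P i j = π j)
    (hirr : ∀ i j, ∃ m : ℕ, 1 ≤ m ∧ 0 < (P ^ m) i j)
    (hμ : ∀ (n : ℕ) (a : Fin (n + 1) → A), wp μ a = hmmProb π P R n a) :
    (∃ γp : ℝ, CondFE μ γp) ↔
      ∀ s : S, ∃ L : ℕ, 1 < Set.ncard {a : Fin (L + 1) → A | 0 < hmmCond P R s L a} := by
  classical
  have hSne : Nonempty S := by
    by_contra h
    rw [not_nonempty_iff] at h
    rw [Finset.univ_eq_empty, Finset.sum_empty] at hπsum
    norm_num at hπsum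
  constructor
  · rintro ⟨γp, hγneg, hFE⟩ s0
    by_contra hnot
    push_neg at hnot
    have hπ0 : 0 < π s0 := pi_pos hPnn hπnn hπsum hπstat hirr s0
    have huniq : ∀ n : ℕ, ∃ a : Fin (n + 1) → A, hmmCond P R s0 n a = 1 := by
      intro n
      have hsum := hmmCond_sum hPnn hProw hRnn hRrow s0 n
      obtain ⟨a₀, ha₀⟩ : ∃ a : Fin (n + 1) → A, 0 < hmmCond P R s0 n a := by
        by_contra hc
        push_neg at hc
        have hle : ∑ a : Fin (n + 1) → A, hmmCond P R s0 n a ≤ 0 :=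
          Finset.sum_nonpos fun a _ => hc a
        rw [hsum] at hle
        norm_num at hle
      refine ⟨a₀, ?_⟩
      rw [← hsum]
      symm
      refine Finset.sum_eq_single a₀ (fun b _ hb => ?_) (by simp)
      by_contra hb0
      have hbpos : 0 < hmmCond P R s0 n b :=
        lt_of_le_of_ne (hmmCond_nonneg hPnn hProw hRnn s0 n b) (Ne.symm hb0)
      have h2 : 1 < Set.ncard {a : Fin (n + 1) → A | 0 < hmmCond P R s0 n a} := by
        rw [Set.one_lt_ncard_iff (Set.toFinite _)]
        exact ⟨b, a₀, hbpos, ha₀, hb⟩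
      exact absurd h2 (not_lt.mpr (hnot n))
    obtain ⟨N, hN⟩ := Filter.eventually_atTop.mp hFE
    set x := Real.log (π s0) / γp with hxdef
    obtain ⟨m, hM⟩ : ∃ m, max N (⌈x⌉₊ + 1) = m + 1 := ⟨max N (⌈x⌉₊ + 1) - 1, by omega⟩
    obtain ⟨a, ha⟩ := huniq m
    have hwp : π s0 ≤ wp μ a := by
      rw [hμ m a, hmmProb_eq_sum]
      calc π s0 = π s0 * hmmCond P R s0 m a := by rw [ha, mul_one]
        _ ≤ ∑ s, π s * hmmCond P R s m a :=
            Finset.single_le_sum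
              (fun s _ => mul_nonneg (hπnn s) (hmmCond_nonneg hPnn hProw hRnn s m a))
              (Finset.mem_univ s0)
    have hcylpos : 0 < μ (cyl a) := by
      rw [pos_iff_ne_zero]
      intro h0
      have hz : wp μ a = 0 := by rw [wp, h0, ENNReal.toReal_zero]
      rw [hz] at hwp
      linarith
    have hNle : N ≤ m + 1 := hM ▸ le_max_left _ _
    have hle := hN (m + 1) hNle a hcylpos
    have hxm : x < ((m : ℝ) + 1) := by
      have h1 : ⌈x⌉₊ + 1 ≤ m + 1 := hM ▸ le_max_right _ _
      have h2 : (⌈x⌉₊ : ℝ) ≤ (m : ℝ) := by exact_mod_cast Nat.succ_le_succ_iff.mp h1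
      have := Nat.le_ceil x
      linarith
    have hlt : Real.exp (γp * ((m : ℕ) + 1 : ℕ)) < π s0 := by
      have h3 : γp * ((m : ℝ) + 1) < γp * x := mul_lt_mul_of_neg_left hxm hγneg
      have h4 : γp * x = Real.log (π s0) := by
        rw [hxdef, mul_comm]
        exact div_mul_cancel₀ _ (ne_of_lt hγneg)
      rw [h4] at h3
      calc Real.exp (γp * ((m : ℕ) + 1 : ℕ)) = Real.exp (γp * ((m : ℝ) + 1)) := by
            push_cast
            ring_nf
        _ < Real.exp (Real.log (π s0)) := Real.exp_lt_exp.mpr h3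
        _ = π s0 := Real.exp_log hπ0
    have := hle.trans_lt hlt
    linarith
  · intro hR2
    choose Lf hLf using hR2
    set L := Finset.univ.sup Lf with hLdef
    have hLle : ∀ s, Lf s ≤ L := fun s => Finset.le_sup (Finset.mem_univ s)
    have htwo : ∀ s : S, ∃ l1 l2 : List A, l1.length = L + 1 ∧ l2.length = L + 1 ∧
        l1 ≠ l2 ∧ 0 < gword P R s l1 ∧ 0 < gword P R s l2 := by
      intro s
      obtain ⟨a1, a2, h1, h2, hane⟩ :=
        (Set.one_lt_ncard_iff (Set.toFinite _)).mp (hLf s)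
      rw [Set.mem_setOf_eq, hmmCond_eq_gword hProw] at h1 h2
      obtain ⟨v1, hv1⟩ := exists_extension hPnn hProw hRnn hRrow s _ h1 (L - Lf s)
      obtain ⟨v2, hv2⟩ := exists_extension hPnn hProw hRnn hRrow s _ h2 (L - Lf s)
      refine ⟨_, _, ?_, ?_, ?_, hv1, hv2⟩
      · rw [List.length_append, List.length_ofFn, List.length_ofFn]
        have := hLle s
        omega
      · rw [List.length_append, List.length_ofFn, List.length_ofFn]
        have := hLle s
        omega
      · intro hEq
        have hinj := List.append_inj hEq (by rw [List.length_ofFn, List.length_ofFn])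
        exact hane (List.ofFn_injective hinj.1)
    choose l1 l2 hlen1 hlen2 hlne hpos1 hpos2 using htwo
    set ε := fun s => min (gword P R s (l1 s)) (gword P R s (l2 s)) with hεdef
    have hεpos : ∀ s, 0 < ε s := fun s => lt_min (hpos1 s) (hpos2 s)
    have hSuniv : (Finset.univ : Finset S).Nonempty := Finset.univ_nonempty
    set εm := Finset.univ.inf' hSuniv ε with hεmdef
    have hεm : 0 < εm := (Finset.lt_inf'_iff _).mpr fun s _ => hεpos s
    set c := max (1 - εm) (1 / 2) with hcdef
    have hc0 : (0 : ℝ) < c := lt_of_lt_of_le (by norm_num) (le_max_right _ _)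
    have hεm1 : εm ≤ 1 := by
      obtain ⟨s⟩ := hSne
      calc εm ≤ ε s := Finset.inf'_le _ (Finset.mem_univ s)
        _ ≤ gword P R s (l1 s) := min_le_left _ _
        _ ≤ 1 := gword_le_one hPnn hProw hRnn hRrow s _
    have hc1 : c < 1 := max_lt (by linarith) (by norm_num)
    have hcb : ∀ (s : S) (l : List A), l.length = L + 1 → gword P R s l ≤ c := by
      intro s l hl
      obtain ⟨l', hl'len, hl'ne, hl'ge⟩ :
          ∃ l', l'.length = L + 1 ∧ l' ≠ l ∧ ε s ≤ gword P R s l' := by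
        by_cases h : l = l1 s
        · refine ⟨l2 s, hlen2 s, fun hh => hlne s ?_, min_le_right _ _⟩
          rw [← h]
          exact hh.symm
        · exact ⟨l1 s, hlen1 s, fun hh => h hh.symm, min_le_left _ _⟩
      have hpair : gword P R s l + gword P R s l' ≤ 1 := by
        have e1 := ofFn_of_length hl
        have e2 := ofFn_of_length hl'len
        have hfg : (fun i : Fin (L + 1) => l.get (Fin.cast hl.symm i)) ≠
            (fun i : Fin (L + 1) => l'.get (Fin.cast hl'len.symm i)) := by
          intro hEq
          exact hl'ne (by rw [← e2, ← e1, hEq])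
        have := gword_pair_le_one hPnn hProw hRnn hRrow s hfg
        rwa [e1, e2] at this
      have hεs : εm ≤ ε s := Finset.inf'_le _ (Finset.mem_univ s)
      calc gword P R s l ≤ 1 - εm := by linarith
        _ ≤ c := le_max_left _ _
    have hdecay := gword_decay hPnn hProw hRnn hRrow hc0.le hcb
    have hlogc : Real.log c < 0 := Real.log_neg hc0 hc1
    refine ⟨Real.log c / (2 * ((L : ℝ) + 1)),
      div_neg_of_neg_of_pos hlogc (by positivity), ?_⟩
    rw [Filter.eventually_atTop]
    refine ⟨L + 2, fun n hn a _ => ?_⟩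
    obtain ⟨m, rfl⟩ : ∃ m, n = m + 1 := ⟨n - 1, by omega⟩
    have hbound : wp μ a ≤ c ^ ((m + 1) / (L + 1)) := by
      rw [hμ m a, hmmProb_eq_sum]
      calc ∑ s, π s * hmmCond P R s m a
          ≤ ∑ s, π s * c ^ ((m + 1) / (L + 1)) := by
            refine Finset.sum_le_sum fun s _ => mul_le_mul_of_nonneg_left ?_ (hπnn s)
            rw [hmmCond_eq_gword hProw]
            exact hdecay (m + 1) (List.ofFn a) (by simp) s
        _ = c ^ ((m + 1) / (L + 1)) := by rw [← Finset.sum_mul, hπsum, one_mul]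
    refine hbound.trans ?_
    set q := (m + 1) / (L + 1) with hqdef
    have hq1 : 1 ≤ q := (Nat.one_le_div_iff (by omega)).mpr (by omega)
    have hmod : (L + 1) * q + (m + 1) % (L + 1) = m + 1 := by
      rw [hqdef]
      exact Nat.div_add_mod _ _
    have hmlt : (m + 1) % (L + 1) < L + 1 := Nat.mod_lt _ (by omega)
    have hDq : L + 1 ≤ (L + 1) * q := Nat.le_mul_of_pos_right _ hq1
    have hkey : m + 1 ≤ 2 * ((L + 1) * q) := by
      have hr : (m + 1) % (L + 1) ≤ (L + 1) * q := le_trans (Nat.le_of_lt hmlt) hDq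
      linarith [hmod]
    have hkeyR : ((m : ℝ) + 1) ≤ 2 * ((L : ℝ) + 1) * (q : ℝ) := by
      have := (Nat.cast_le (α := ℝ)).mpr hkey
      push_cast at this
      linarith
    have hcq : c ^ q = Real.exp ((q : ℝ) * Real.log c) := by
      conv_lhs => rw [← Real.exp_log hc0]
      rw [← Real.exp_nat_mul]
    rw [hcq, Real.exp_le_exp]
    have hgoal : ((m : ℕ) + 1 : ℕ) = ((m : ℝ) + 1) := by push_cast; ring
    rw [div_mul_eq_mul_div, le_div_iff₀ (by positivity : (0 : ℝ) < 2 * ((L : ℝ) + 1))]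
    have hmul := mul_le_mul_of_nonpos_left hkeyR hlogc.le
    push_cast
    nlinarith [hmul]


end ZM
end
end
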